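/- In the modified AKV model, set a := 2(N−1)Γ_{2,−} and b := 2(N−1)Γ_{2,+}, and regard ℒ_* as a linear endomorphism of the space of linear operators on h. If σ is a state whose range is contained in Im|Z| ∩ {ψ, Z*ψ'}^⊥, then for every t ≥ 0 one has exp(t ℒ_*)(σ) = ((b + a·e^{−t(a+b)})/(a+b)) σ + ((a·(1 − e^{−t(a+b)}))/(a+b)) Z σ Z*; consequently exp(t ℒ_*)(σ) converges, as t → ∞, to (b/(a+b)) σ + (a/(a+b)) Z σ Z*. -/

import Mathlib

/-!
On operators `ρ` that are self-adjoint, annihilate `e₁`, `ψ`, `ψ'` and commute with `P₃` and `|Z|`,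
the Hamiltonian part of `ℒ_*` and its three rank-one jump operators act trivially, so `ℒ_*` reduces
to `a D_Z + b D_{Z†}`, with `D_L` the dissipator of the jump operator `L`. Both `σ` and
`τ = Z σ Z†` are of this kind, and since `Z² = 0`, `|Z| σ = σ` and `σ Z = 0`, one finds
`ℒ_* σ = a (τ - σ)` and `ℒ_* τ = b (σ - τ)`. On `span {σ, τ}` the semigroup is thus that of a
two-state Markov chain: `b σ + a τ` is stationary and `σ - τ` decays at rate `a + b`.
-/

noncomputable section

open ContinuousLinearMap Finset
open scoped InnerProductSpace

/-- The Hilbert space ℂ^(N+M+1) of the modified AKV model. -/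
abbrev AKVSpace (N M : ℕ) := EuclideanSpace ℂ (Fin (N + M + 1))

namespace AKV

variable (N M : ℕ)

/-- standard basis vector -/
def ket (i : Fin (N + M + 1)) : AKVSpace N M := EuclideanSpace.single i 1

/-- rank-one operator |u⟩⟨v| : x ↦ ⟪v, x⟫ • u -/
def ketbra (u v : AKVSpace N M) : AKVSpace N M →L[ℂ] AKVSpace N M :=
  (innerSL ℂ v).smulRight u

/-- indices 2,…,N of the second level -/
def idx2 : Finset (Fin (N + M + 1)) := univ.filter fun i => 2 ≤ (i : ℕ) ∧ (i : ℕ) ≤ N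
/-- indices N+1,…,N+M of the third level -/
def idx3 : Finset (Fin (N + M + 1)) := univ.filter fun i => N + 1 ≤ (i : ℕ)

/-- orthogonal projection onto span{e_0} -/
def P0 : AKVSpace N M →L[ℂ] AKVSpace N M := ketbra N M (ket N M 0) (ket N M 0)
/-- orthogonal projection onto span{e_1} -/
def P1 : AKVSpace N M →L[ℂ] AKVSpace N M := ketbra N M (ket N M 1) (ket N M 1)
/-- orthogonal projection onto span{e_2,…,e_N} -/
def P2 : AKVSpace N M →L[ℂ] AKVSpace N M := ∑ i ∈ idx2 N M, ketbra N M (ket N M i) (ket N M i)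
/-- orthogonal projection onto span{e_{N+1},…,e_{N+M}} -/
def P3 : AKVSpace N M →L[ℂ] AKVSpace N M := ∑ i ∈ idx3 N M, ketbra N M (ket N M i) (ket N M i)

/-- ψ = e_2 + ⋯ + e_N -/
def psi : AKVSpace N M := ∑ i ∈ idx2 N M, ket N M i
/-- ψ' = e_{N+1} + ⋯ + e_{N+M} -/
def psi' : AKVSpace N M := ∑ i ∈ idx3 N M, ket N M i

/-- |Z| = Z⋆Z -/
def absZ (Z : AKVSpace N M →L[ℂ] AKVSpace N M) : AKVSpace N M →L[ℂ] AKVSpace N M :=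
  adjoint Z * Z

/-- hypotheses on the interference operator Z of the modified AKV model -/
def IsAKVZ (hM : 1 ≤ M) (Z : AKVSpace N M →L[ℂ] AKVSpace N M) : Prop :=
  Z = P3 N M * Z * P2 N M ∧
  Z * adjoint Z = P3 N M ∧
  Z (ket N M ⟨N - 1, by omega⟩) = ((Real.sqrt ((N : ℝ) - 1))⁻¹ : ℂ) • psi' N M ∧
  adjoint Z (ket N M ⟨N + 1, by omega⟩) = ((Real.sqrt ((N : ℝ) - 1))⁻¹ : ℂ) • psi N M

/-- the five Kraus operators -/
def kraus (Γ1m Γ1p Γ2m Γ2p Γ3m : ℝ) (Z : AKVSpace N M →L[ℂ] AKVSpace N M) :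
    Fin 5 → AKVSpace N M →L[ℂ] AKVSpace N M :=
  ![((Real.sqrt (2 * Γ1m) : ℝ) : ℂ) • ketbra N M (psi N M) (ket N M 1),
    ((Real.sqrt (2 * ((N : ℝ) - 1) * Γ2m) : ℝ) : ℂ) • Z,
    ((Real.sqrt (2 * Γ3m) : ℝ) : ℂ) • ketbra N M (ket N M 0) (psi' N M),
    ((Real.sqrt (2 * Γ1p) : ℝ) : ℂ) • ketbra N M (ket N M 1) (psi N M),
    ((Real.sqrt (2 * ((N : ℝ) - 1) * Γ2p) : ℝ) : ℂ) • adjoint Z]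

/-- the effective Hamiltonian -/
def Heff (γ1m γ1p γ2m γ2p γ3m : ℝ) (Z : AKVSpace N M →L[ℂ] AKVSpace N M) :
    AKVSpace N M →L[ℂ] AKVSpace N M :=
  (γ1p : ℂ) • ketbra N M (psi N M) (psi N M)
    - (((N : ℂ) - 1) * (γ1m : ℂ)) • ketbra N M (ket N M 1) (ket N M 1)
    + (((N : ℂ) - 1) * (γ2p : ℂ)) • P3 N M
    - (((N : ℂ) - 1) * (γ2m : ℂ)) • absZ N M Z
    - (γ3m : ℂ) • ketbra N M (psi' N M) (psi' N M)

/-- the predual GKSL generator ℒ_* of the modified AKV model -/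
def Lstar (Γ1m Γ1p Γ2m Γ2p Γ3m γ1m γ1p γ2m γ2p γ3m : ℝ)
    (Z ρ : AKVSpace N M →L[ℂ] AKVSpace N M) : AKVSpace N M →L[ℂ] AKVSpace N M :=
  -Complex.I • (Heff N M γ1m γ1p γ2m γ2p γ3m Z * ρ - ρ * Heff N M γ1m γ1p γ2m γ2p γ3m Z)
    + ∑ k : Fin 5,
        (kraus N M Γ1m Γ1p Γ2m Γ2p Γ3m Z k * ρ * adjoint (kraus N M Γ1m Γ1p Γ2m Γ2p Γ3m Z k)
          - (1 / 2 : ℂ) • (adjoint (kraus N M Γ1m Γ1p Γ2m Γ2p Γ3m Z k) *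
                kraus N M Γ1m Γ1p Γ2m Γ2p Γ3m Z k * ρ
              + ρ * (adjoint (kraus N M Γ1m Γ1p Γ2m Γ2p Γ3m Z k) *
                kraus N M Γ1m Γ1p Γ2m Γ2p Γ3m Z k)))

/-- a state: positive semidefinite with trace one -/
def IsState (ρ : AKVSpace N M →L[ℂ] AKVSpace N M) : Prop :=
  ρ.IsPositive ∧ LinearMap.trace ℂ (AKVSpace N M) ↑ρ = 1

/-- the interaction-free subspace W_D -/
def WD (Z : AKVSpace N M →L[ℂ] AKVSpace N M) : Submodule ℂ (AKVSpace N M) :=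
  (Submodule.span ℂ {ket N M 1, psi N M, psi' N M})ᗮ ⊓
    LinearMap.ker (Z : AKVSpace N M →ₗ[ℂ] AKVSpace N M) ⊓ LinearMap.ker (adjoint Z : AKVSpace N M →ₗ[ℂ] AKVSpace N M)

/-- the subspace V = {e_0, e_1, ψ, ψ', Zψ, Z⋆ψ'}^⊥ -/
def Vsub (Z : AKVSpace N M →L[ℂ] AKVSpace N M) : Submodule ℂ (AKVSpace N M) :=
  (Submodule.span ℂ
    {ket N M 0, ket N M 1, psi N M, psi' N M, Z (psi N M), adjoint Z (psi' N M)})ᗮ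

/-- Im|Z| ∩ {ψ, Z⋆ψ'}^⊥ -/
def subA (Z : AKVSpace N M →L[ℂ] AKVSpace N M) : Submodule ℂ (AKVSpace N M) :=
  LinearMap.range (absZ N M Z : AKVSpace N M →ₗ[ℂ] AKVSpace N M) ⊓ (Submodule.span ℂ {psi N M, adjoint Z (psi' N M)})ᗮ

/-- ran P₃ ∩ {ψ', Zψ}^⊥ -/
def subB (Z : AKVSpace N M →L[ℂ] AKVSpace N M) : Submodule ℂ (AKVSpace N M) :=
  LinearMap.range (P3 N M : AKVSpace N M →ₗ[ℂ] AKVSpace N M) ⊓ (Submodule.span ℂ {psi' N M, Z (psi N M)})ᗮ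

/-- the orthogonal projection onto a subspace, as an operator on the whole space -/
def projOp (U : Submodule ℂ (AKVSpace N M)) : AKVSpace N M →L[ℂ] AKVSpace N M :=
  U.subtypeL ∘L U.orthogonalProjectionOnto

/-- `ℒ_*` of the modified AKV model as a linear endomorphism of the operator space. -/
def LstarLin (N M : ℕ) (Γ1m Γ1p Γ2m Γ2p Γ3m γ1m γ1p γ2m γ2p γ3m : ℝ)
    (Z : AKVSpace N M →L[ℂ] AKVSpace N M) :
    (AKVSpace N M →L[ℂ] AKVSpace N M) →ₗ[ℂ] (AKVSpace N M →L[ℂ] AKVSpace N M) :=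
  -Complex.I • (LinearMap.mulLeft ℂ (Heff N M γ1m γ1p γ2m γ2p γ3m Z)
      - LinearMap.mulRight ℂ (Heff N M γ1m γ1p γ2m γ2p γ3m Z))
    + ∑ k : Fin 5,
        ((LinearMap.mulRight ℂ
            (ContinuousLinearMap.adjoint (kraus N M Γ1m Γ1p Γ2m Γ2p Γ3m Z k))).comp
            (LinearMap.mulLeft ℂ (kraus N M Γ1m Γ1p Γ2m Γ2p Γ3m Z k))
          - (1 / 2 : ℂ) •
            (LinearMap.mulLeft ℂ
              (ContinuousLinearMap.adjoint (kraus N M Γ1m Γ1p Γ2m Γ2p Γ3m Z k) *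
                kraus N M Γ1m Γ1p Γ2m Γ2p Γ3m Z k)
              + LinearMap.mulRight ℂ
                (ContinuousLinearMap.adjoint (kraus N M Γ1m Γ1p Γ2m Γ2p Γ3m Z k) *
                  kraus N M Γ1m Γ1p Γ2m Γ2p Γ3m Z k)))

set_option maxHeartbeats 1000000 in
instance (N M : ℕ) :
    IsTopologicalRing ((AKVSpace N M →L[ℂ] AKVSpace N M) →L[ℂ]
      (AKVSpace N M →L[ℂ] AKVSpace N M)) := by
  exact @NonUnitalSeminormedRing.toIsTopologicalRing
    ((AKVSpace N M →L[ℂ] AKVSpace N M) →L[ℂ] (AKVSpace N M →L[ℂ] AKVSpace N M)) _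

end AKV

open Filter Topology

section TwoState

variable {E : Type*} [NormedAddCommGroup E] [NormedSpace ℂ E]

theorem ContinuousLinearMap.exp_apply_of_apply_eq_smul [CompleteSpace E] {A : E →L[ℂ] E} {v : E}
    {c : ℂ} (h : A v = c • v) : NormedSpace.exp A v = Complex.exp c • v := by
  have hpow (n : ℕ) : (A ^ n) v = c ^ n • v := by
    induction n with
    | zero => simp
    | succ n ih => rw [pow_succ, mul_apply_eq_comp, h, map_smul, ih, smul_smul, ← pow_succ']
  have hA := (NormedSpace.exp_series_hasSum_exp' (𝕂 := ℂ) A).mapL (ContinuousLinearMap.apply ℂ E v)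
  have hc := (NormedSpace.exp_series_hasSum_exp' (𝕂 := ℂ) c).smul_const v
  rw [← Complex.exp_eq_exp_ℂ] at hc
  refine hA.unique ?_
  simpa [hpow, smul_smul] using hc

theorem exp_smul_apply_eq_of_two_state [CompleteSpace E] {L : E →L[ℂ] E} {σ τ : E} {a b : ℝ}
    (hab : a + b ≠ 0) (hσ : L σ = (a : ℂ) • (τ - σ)) (hτ : L τ = (b : ℂ) • (σ - τ)) (t : ℝ) :
    NormedSpace.exp ((t : ℂ) • L) σ
      = (((b + a * Real.exp (-(t * (a + b)))) / (a + b) : ℝ) : ℂ) • σ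
        + (((a * (1 - Real.exp (-(t * (a + b))))) / (a + b) : ℝ) : ℂ) • τ := by
  have hstat :
      ((t : ℂ) • L) ((b : ℂ) • σ + (a : ℂ) • τ) = (0 : ℂ) • ((b : ℂ) • σ + (a : ℂ) • τ) := by
    simp only [smul_apply, map_add, map_smul, hσ, hτ]
    module
  have hdecay : ((t : ℂ) • L) (σ - τ) = ((-(t * (a + b)) : ℝ) : ℂ) • (σ - τ) := by
    simp only [smul_apply, map_sub, hσ, hτ]
    push_cast
    module
  have habC : (a : ℂ) + b ≠ 0 := by exact_mod_cast hab
  have hsplit : σ = (((a + b)⁻¹ : ℝ) : ℂ) • ((b : ℂ) • σ + (a : ℂ) • τ)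
      + ((a / (a + b) : ℝ) : ℂ) • (σ - τ) := by
    match_scalars <;> field_simp <;> ring
  conv_lhs => rw [hsplit, map_add, map_smul, map_smul,
    ContinuousLinearMap.exp_apply_of_apply_eq_smul hstat,
    ContinuousLinearMap.exp_apply_of_apply_eq_smul hdecay]
  rw [Complex.exp_zero, one_smul, ← Complex.ofReal_exp]
  match_scalars <;> field_simp
  ring

theorem tendsto_two_state_relaxation {σ τ : E} {a b : ℝ} (hab : 0 < a + b) :
    Tendsto (fun t : ℝ => (((b + a * Real.exp (-(t * (a + b)))) / (a + b) : ℝ) : ℂ) • σ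
        + (((a * (1 - Real.exp (-(t * (a + b))))) / (a + b) : ℝ) : ℂ) • τ)
      atTop (𝓝 (((b / (a + b) : ℝ) : ℂ) • σ + ((a / (a + b) : ℝ) : ℂ) • τ)) := by
  have hdecay : Tendsto (fun t : ℝ => Real.exp (-(t * (a + b)))) atTop (𝓝 0) :=
    Real.tendsto_exp_atBot.comp (tendsto_neg_atTop_atBot.comp (tendsto_id.atTop_mul_const hab))
  have hcont : Continuous fun e : ℝ => (((b + a * e) / (a + b) : ℝ) : ℂ) • σ
      + (((a * (1 - e)) / (a + b) : ℝ) : ℂ) • τ := by fun_prop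
  have hlim := hcont.tendsto 0
  simp only [mul_zero, add_zero, sub_zero, mul_one] at hlim
  exact hlim.comp hdecay

end TwoState

theorem Fin.val_one_le_one (n : ℕ) : ((1 : Fin (n + 1)) : ℕ) ≤ 1 :=
  (Fin.val_one' _).trans_le (Nat.mod_le 1 _)

section Dissipator

variable {E : Type*} [NormedAddCommGroup E] [InnerProductSpace ℂ E] [CompleteSpace E]

def dissipator (L ρ : E →L[ℂ] E) : E →L[ℂ] E :=
  L * ρ * adjoint L - (1 / 2 : ℂ) • (adjoint L * L * ρ + ρ * (adjoint L * L))

theorem dissipator_smul (c : ℂ) (L ρ : E →L[ℂ] E) :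
    dissipator (c • L) ρ = (c * starRingEnd ℂ c) • dissipator L ρ := by
  simp only [dissipator, map_smulₛₗ, smul_mul_assoc, mul_smul_comm, smul_smul, smul_sub,
    smul_add]
  rw [mul_comm (starRingEnd ℂ c) c, mul_comm (1 / 2 : ℂ)]

theorem dissipator_ofReal_sqrt_smul {x : ℝ} (hx : 0 ≤ x) (L ρ : E →L[ℂ] E) :
    dissipator (((√x : ℝ) : ℂ) • L) ρ = (x : ℂ) • dissipator L ρ := by
  rw [dissipator_smul, Complex.conj_ofReal, ← Complex.ofReal_mul, Real.mul_self_sqrt hx]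

end Dissipator

theorem IsIdempotentElem.mul_eq_self_of_range_le {R M : Type*} [Semiring R] [TopologicalSpace M]
    [AddCommMonoid M] [Module R M] {A T : M →L[R] M} (hA : IsIdempotentElem A)
    (h : LinearMap.range (T : M →ₗ[R] M) ≤ LinearMap.range (A : M →ₗ[R] M)) : A * T = T := by
  ext1 x
  obtain ⟨y, hy⟩ := h ⟨x, rfl⟩
  change A y = T x at hy
  rw [mul_apply_eq_comp, ← hy, ← mul_apply_eq_comp, hA.eq]

theorem IsSelfAdjoint.apply_eq_zero_of_range_le_orthogonal {𝕜 E : Type*} [RCLike 𝕜]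
    [NormedAddCommGroup E] [InnerProductSpace 𝕜 E] [CompleteSpace E] {T : E →L[𝕜] E}
    (hT : IsSelfAdjoint T) {K : Submodule 𝕜 E} (h : LinearMap.range (T : E →ₗ[𝕜] E) ≤ Kᗮ)
    {x : E} (hx : x ∈ K) : T x = 0 := by
  have hx' : x ∈ (LinearMap.range (T : E →ₗ[𝕜] E))ᗮ :=
    Submodule.orthogonal_le h (Submodule.le_orthogonal_orthogonal K hx)
  rwa [T.orthogonal_range, isSelfAdjoint_iff'.mp hT] at hx'

namespace AKV

variable {N M : ℕ}

theorem ketbra_apply (u v x : AKVSpace N M) : ketbra N M u v x = ⟪v, x⟫_ℂ • u := rfl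

@[simp] theorem ketbra_zero_left (v : AKVSpace N M) : ketbra N M 0 v = 0 := by
  ext1 x; simp [ketbra_apply]

@[simp] theorem ketbra_zero_right (u : AKVSpace N M) : ketbra N M u 0 = 0 := by
  ext1 x; simp [ketbra_apply]

theorem adjoint_ketbra (u v : AKVSpace N M) : adjoint (ketbra N M u v) = ketbra N M v u := by
  refine (eq_adjoint_iff _ _ |>.mpr fun x y => ?_).symm
  simp only [ketbra_apply, inner_smul_left, inner_smul_right, inner_conj_symm, mul_comm]

theorem mul_ketbra (A : AKVSpace N M →L[ℂ] AKVSpace N M) (u v : AKVSpace N M) :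
    A * ketbra N M u v = ketbra N M (A u) v := by
  ext1 x; simp [mul_apply_eq_comp, ketbra_apply]

theorem ketbra_mul (u v : AKVSpace N M) (A : AKVSpace N M →L[ℂ] AKVSpace N M) :
    ketbra N M u v * A = ketbra N M u (adjoint A v) := by
  ext1 x; simp [mul_apply_eq_comp, ketbra_apply, adjoint_inner_left]

theorem inner_ket_ket (i j : Fin (N + M + 1)) :
    ⟪ket N M i, ket N M j⟫_ℂ = if i = j then 1 else 0 := by
  simp [ket, EuclideanSpace.inner_single_left]

theorem sum_ketbra_ket_apply_ket (s : Finset (Fin (N + M + 1))) (j : Fin (N + M + 1)) :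
    (∑ i ∈ s, ketbra N M (ket N M i) (ket N M i)) (ket N M j) = if j ∈ s then ket N M j else 0 := by
  simp [ketbra_apply, inner_ket_ket]

theorem sum_ketbra_ket_apply_sum_ket (s t : Finset (Fin (N + M + 1))) :
    (∑ i ∈ s, ketbra N M (ket N M i) (ket N M i)) (∑ j ∈ t, ket N M j)
      = ∑ i ∈ s ∩ t, ket N M i := by
  rw [map_sum, Finset.inter_comm, ← Finset.sum_ite_mem]
  simp only [sum_ketbra_ket_apply_ket]

theorem sum_ketbra_ket_mul_sum_ketbra_ket (s t : Finset (Fin (N + M + 1))) :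
    (∑ i ∈ s, ketbra N M (ket N M i) (ket N M i)) * (∑ j ∈ t, ketbra N M (ket N M j) (ket N M j))
      = ∑ i ∈ s ∩ t, ketbra N M (ket N M i) (ket N M i) := by
  rw [Finset.inter_comm, ← Finset.sum_ite_mem, Finset.mul_sum]
  refine Finset.sum_congr rfl fun j _ => ?_
  rw [mul_ketbra, sum_ketbra_ket_apply_ket]
  split_ifs <;> simp

theorem isSelfAdjoint_sum_ketbra_ket (s : Finset (Fin (N + M + 1))) :
    IsSelfAdjoint (∑ i ∈ s, ketbra N M (ket N M i) (ket N M i)) := by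
  rw [isSelfAdjoint_iff', map_sum]
  exact Finset.sum_congr rfl fun i _ => adjoint_ketbra _ _

theorem disjoint_idx2_idx3 : Disjoint (idx2 N M) (idx3 N M) := by
  simp only [idx2, idx3, Finset.disjoint_filter]
  omega

theorem one_notMem_idx2 : (1 : Fin (N + M + 1)) ∉ idx2 N M := by
  have := Fin.val_one_le_one (N + M)
  simp only [idx2, Finset.mem_filter, Finset.mem_univ, true_and]
  omega

theorem one_notMem_idx3 (hN : 1 ≤ N) : (1 : Fin (N + M + 1)) ∉ idx3 N M := by
  have := Fin.val_one_le_one (N + M)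
  simp only [idx3, Finset.mem_filter, Finset.mem_univ, true_and]
  omega

theorem isSelfAdjoint_P3 : IsSelfAdjoint (P3 N M) := isSelfAdjoint_sum_ketbra_ket _

theorem isIdempotentElem_P3 : IsIdempotentElem (P3 N M) := by
  rw [IsIdempotentElem, P3, sum_ketbra_ket_mul_sum_ketbra_ket, Finset.inter_self]

theorem P2_mul_P3 : P2 N M * P3 N M = 0 := by
  rw [P2, P3, sum_ketbra_ket_mul_sum_ketbra_ket,
    Finset.disjoint_iff_inter_eq_empty.mp disjoint_idx2_idx3, Finset.sum_empty]

theorem P2_apply_of_disjoint {t : Finset (Fin (N + M + 1))} (h : Disjoint (idx2 N M) t) :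
    P2 N M (∑ j ∈ t, ket N M j) = 0 := by
  rw [P2, sum_ketbra_ket_apply_sum_ket, Finset.disjoint_iff_inter_eq_empty.mp h, Finset.sum_empty]

theorem P3_apply_of_disjoint {t : Finset (Fin (N + M + 1))} (h : Disjoint (idx3 N M) t) :
    P3 N M (∑ j ∈ t, ket N M j) = 0 := by
  rw [P3, sum_ketbra_ket_apply_sum_ket, Finset.disjoint_iff_inter_eq_empty.mp h, Finset.sum_empty]

theorem P2_apply_ket_one : P2 N M (ket N M 1) = 0 := by
  simpa using P2_apply_of_disjoint (Finset.disjoint_singleton_right.mpr one_notMem_idx2)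

theorem P3_apply_ket_one (hN : 1 ≤ N) : P3 N M (ket N M 1) = 0 := by
  simpa using P3_apply_of_disjoint (Finset.disjoint_singleton_right.mpr (one_notMem_idx3 hN))

theorem P2_apply_psi' : P2 N M (psi' N M) = 0 := P2_apply_of_disjoint disjoint_idx2_idx3

theorem P3_apply_psi : P3 N M (psi N M) = 0 := P3_apply_of_disjoint disjoint_idx2_idx3.symm

theorem isSelfAdjoint_absZ (Z : AKVSpace N M →L[ℂ] AKVSpace N M) : IsSelfAdjoint (absZ N M Z) :=
  IsSelfAdjoint.star_mul_self Z

section InterferenceOperator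

variable {Z : AKVSpace N M →L[ℂ] AKVSpace N M} (hZ : Z = P3 N M * Z * P2 N M)
include hZ

theorem P3_mul_Z : P3 N M * Z = Z := by
  rw [hZ, ← mul_assoc, ← mul_assoc, isIdempotentElem_P3.eq]

theorem Z_mul_Z : Z * Z = 0 := by
  rw [hZ, mul_assoc, ← mul_assoc (P2 N M), ← mul_assoc (P2 N M), P2_mul_P3]
  simp

theorem adjoint_Z_mul_adjoint_Z : adjoint Z * adjoint Z = 0 := by
  rw [← star_eq_adjoint, ← star_mul, Z_mul_Z hZ, star_zero]

theorem Z_apply_eq_zero {x : AKVSpace N M} (hx : P2 N M x = 0) : Z x = 0 := by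
  rw [hZ, mul_apply_eq_comp, hx, map_zero]

theorem adjoint_Z_mul_P3 : adjoint Z * P3 N M = adjoint Z := by
  rw [← star_eq_adjoint, ← isSelfAdjoint_P3.star_eq, ← star_mul, P3_mul_Z hZ]

theorem adjoint_Z_apply_eq_zero {x : AKVSpace N M} (hx : P3 N M x = 0) : adjoint Z x = 0 := by
  rw [← adjoint_Z_mul_P3 hZ, mul_apply_eq_comp, hx, map_zero]

theorem isIdempotentElem_absZ (hZZ : Z * adjoint Z = P3 N M) : IsIdempotentElem (absZ N M Z) := by
  rw [IsIdempotentElem, absZ, mul_assoc, ← mul_assoc Z, hZZ, ← mul_assoc, mul_assoc _ (P3 N M),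
    P3_mul_Z hZ]

end InterferenceOperator

section Generator

variable {ρ : AKVSpace N M →L[ℂ] AKVSpace N M}

theorem ketbra_mul_eq_zero (hρ : IsSelfAdjoint ρ) (u : AKVSpace N M) {v : AKVSpace N M}
    (hv : ρ v = 0) : ketbra N M u v * ρ = 0 := by
  rw [ketbra_mul, isSelfAdjoint_iff'.mp hρ, hv, ketbra_zero_right]

theorem mul_ketbra_eq_zero {u : AKVSpace N M} (hu : ρ u = 0) (v : AKVSpace N M) :
    ρ * ketbra N M u v = 0 := by
  rw [mul_ketbra, hu, ketbra_zero_left]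

theorem dissipator_ketbra_eq_zero (hρ : IsSelfAdjoint ρ) (u : AKVSpace N M) {v : AKVSpace N M}
    (hv : ρ v = 0) : dissipator (ketbra N M u v) ρ = 0 := by
  rw [dissipator, adjoint_ketbra, ketbra_mul_eq_zero hρ u hv, mul_assoc (ketbra N M v u),
    ketbra_mul_eq_zero hρ u hv, ← mul_assoc ρ, mul_ketbra_eq_zero hv]
  simp

theorem commute_ketbra_self (hρ : IsSelfAdjoint ρ) {u : AKVSpace N M} (hu : ρ u = 0) :
    Commute (ketbra N M u u) ρ := by
  rw [Commute, SemiconjBy, ketbra_mul_eq_zero hρ u hu, mul_ketbra_eq_zero hu]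

variable {Z : AKVSpace N M →L[ℂ] AKVSpace N M}

theorem commute_Heff (γ1m γ1p γ2m γ2p γ3m : ℝ) (hρ : IsSelfAdjoint ρ)
    (he1 : ρ (ket N M 1) = 0) (hψ : ρ (psi N M) = 0) (hψ' : ρ (psi' N M) = 0)
    (hP3 : Commute (P3 N M) ρ) (habsZ : Commute (absZ N M Z) ρ) :
    Commute (Heff N M γ1m γ1p γ2m γ2p γ3m Z) ρ :=
  (((((commute_ketbra_self hρ hψ).smul_left _).sub_left
    ((commute_ketbra_self hρ he1).smul_left _)).add_left (hP3.smul_left _)).sub_left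
    (habsZ.smul_left _)).sub_left ((commute_ketbra_self hρ hψ').smul_left _)

theorem LstarLin_apply (Γ1m Γ1p Γ2m Γ2p Γ3m γ1m γ1p γ2m γ2p γ3m : ℝ)
    (ρ : AKVSpace N M →L[ℂ] AKVSpace N M) :
    LstarLin N M Γ1m Γ1p Γ2m Γ2p Γ3m γ1m γ1p γ2m γ2p γ3m Z ρ
      = -Complex.I • (Heff N M γ1m γ1p γ2m γ2p γ3m Z * ρ - ρ * Heff N M γ1m γ1p γ2m γ2p γ3m Z)
        + ∑ k, dissipator (kraus N M Γ1m Γ1p Γ2m Γ2p Γ3m Z k) ρ := by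
  simp only [LstarLin, dissipator, LinearMap.add_apply, LinearMap.smul_apply, LinearMap.sub_apply,
    LinearMap.sum_apply, LinearMap.mulLeft_apply, LinearMap.mulRight_apply,
    LinearMap.comp_apply]

theorem LstarLin_apply_of_commute (Γ1m Γ1p Γ2m Γ2p Γ3m γ1m γ1p γ2m γ2p γ3m : ℝ)
    (ha : 0 ≤ 2 * ((N : ℝ) - 1) * Γ2m) (hb : 0 ≤ 2 * ((N : ℝ) - 1) * Γ2p) (hρ : IsSelfAdjoint ρ)
    (he1 : ρ (ket N M 1) = 0) (hψ : ρ (psi N M) = 0) (hψ' : ρ (psi' N M) = 0)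
    (hP3 : Commute (P3 N M) ρ) (habsZ : Commute (absZ N M Z) ρ) :
    LstarLin N M Γ1m Γ1p Γ2m Γ2p Γ3m γ1m γ1p γ2m γ2p γ3m Z ρ
      = ((2 * ((N : ℝ) - 1) * Γ2m : ℝ) : ℂ) • dissipator Z ρ
        + ((2 * ((N : ℝ) - 1) * Γ2p : ℝ) : ℂ) • dissipator (adjoint Z) ρ := by
  rw [LstarLin_apply, (commute_Heff γ1m γ1p γ2m γ2p γ3m hρ he1 hψ hψ' hP3 habsZ).eq, sub_self,
    smul_zero, zero_add, Fin.sum_univ_five]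
  simp only [kraus, Matrix.cons_val_zero, Matrix.cons_val_one, Matrix.cons_val_two,
    Matrix.cons_val_three, Matrix.cons_val_four, Matrix.head_cons, Matrix.tail_cons,
    dissipator_ofReal_sqrt_smul ha, dissipator_ofReal_sqrt_smul hb, dissipator_smul,
    dissipator_ketbra_eq_zero hρ _ he1, dissipator_ketbra_eq_zero hρ _ hψ,
    dissipator_ketbra_eq_zero hρ _ hψ', smul_zero, zero_add, add_zero]

end Generator

section SupportedState

variable {Z σ : AKVSpace N M →L[ℂ] AKVSpace N M} (hZ : Z = P3 N M * Z * P2 N M)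
  (hZZ : Z * adjoint Z = P3 N M) (hσ : IsSelfAdjoint σ)
  (hrange : LinearMap.range (σ : AKVSpace N M →ₗ[ℂ] AKVSpace N M) ≤ subA N M Z)
include hZ hZZ hrange

theorem absZ_mul_eq_self_of_range_le : absZ N M Z * σ = σ :=
  (isIdempotentElem_absZ hZ hZZ).mul_eq_self_of_range_le (hrange.trans inf_le_left)

include hσ

theorem mul_absZ_eq_self_of_range_le : σ * absZ N M Z = σ := by
  have habsσ := absZ_mul_eq_self_of_range_le hZ hZZ hrange
  rw [← (IsSelfAdjoint.commute_of_mul_eq_isSelfAdjoint _ _ _ (isSelfAdjoint_absZ Z) hσ hσ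
    habsσ).eq, habsσ]

theorem apply_eq_zero_of_Z_apply_eq_zero {x : AKVSpace N M} (hx : Z x = 0) : σ x = 0 := by
  rw [← mul_absZ_eq_self_of_range_le hZ hZZ hσ hrange, absZ, mul_apply_eq_comp,
    mul_apply_eq_comp, hx, map_zero, map_zero]

theorem mul_Z_eq_zero_of_range_le : σ * Z = 0 := by
  rw [← mul_absZ_eq_self_of_range_le hZ hZZ hσ hrange, absZ, mul_assoc, mul_assoc, Z_mul_Z hZ,
    mul_zero, mul_zero]

theorem mul_P3_eq_zero_of_range_le : σ * P3 N M = 0 := by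
  rw [← hZZ, ← mul_assoc, mul_Z_eq_zero_of_range_le hZ hZZ hσ hrange, zero_mul]

theorem commute_P3_of_range_le : Commute (P3 N M) σ :=
  (IsSelfAdjoint.commute_of_mul_eq_isSelfAdjoint _ _ _ hσ isSelfAdjoint_P3
    (.zero (AKVSpace N M →L[ℂ] AKVSpace N M)) (mul_P3_eq_zero_of_range_le hZ hZZ hσ hrange)).symm

variable (Γ1m Γ1p Γ2m Γ2p Γ3m γ1m γ1p γ2m γ2p γ3m : ℝ)
  (ha : 0 ≤ 2 * ((N : ℝ) - 1) * Γ2m) (hb : 0 ≤ 2 * ((N : ℝ) - 1) * Γ2p)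
include ha hb

theorem LstarLin_apply_of_range_le :
    LstarLin N M Γ1m Γ1p Γ2m Γ2p Γ3m γ1m γ1p γ2m γ2p γ3m Z σ
      = ((2 * ((N : ℝ) - 1) * Γ2m : ℝ) : ℂ) • (Z * σ * adjoint Z - σ) := by
  have habsσ : adjoint Z * Z * σ = σ := absZ_mul_eq_self_of_range_le hZ hZZ hrange
  have hσabs : σ * (adjoint Z * Z) = σ := mul_absZ_eq_self_of_range_le hZ hZZ hσ hrange
  have hσP3 := mul_P3_eq_zero_of_range_le hZ hZZ hσ hrange
  have hP3 := commute_P3_of_range_le hZ hZZ hσ hrange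
  have hP3σ : P3 N M * σ = 0 := hP3.eq.trans hσP3
  have he1 : σ (ket N M 1) = 0 :=
    apply_eq_zero_of_Z_apply_eq_zero hZ hZZ hσ hrange (Z_apply_eq_zero hZ P2_apply_ket_one)
  have hψ' : σ (psi' N M) = 0 :=
    apply_eq_zero_of_Z_apply_eq_zero hZ hZZ hσ hrange (Z_apply_eq_zero hZ P2_apply_psi')
  have hψ : σ (psi N M) = 0 :=
    hσ.apply_eq_zero_of_range_le_orthogonal (hrange.trans inf_le_right)
      (Submodule.subset_span (by simp))
  rw [LstarLin_apply_of_commute Γ1m Γ1p Γ2m Γ2p Γ3m γ1m γ1p γ2m γ2p γ3m ha hb hσ he1 hψ hψ'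
    hP3 (habsσ.trans hσabs.symm)]
  have hZσZ : adjoint Z * σ * Z = 0 := by
    rw [mul_assoc, mul_Z_eq_zero_of_range_le hZ hZZ hσ hrange, mul_zero]
  simp only [dissipator, adjoint_adjoint, habsσ, hσabs, hZZ, hP3σ, hσP3, hZσZ]
  module

theorem LstarLin_apply_conj_of_range_le (hN : 1 ≤ N) :
    LstarLin N M Γ1m Γ1p Γ2m Γ2p Γ3m γ1m γ1p γ2m γ2p γ3m Z (Z * σ * adjoint Z)
      = ((2 * ((N : ℝ) - 1) * Γ2p : ℝ) : ℂ) • (σ - Z * σ * adjoint Z) := by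
  have habsσ : adjoint Z * Z * σ = σ := absZ_mul_eq_self_of_range_le hZ hZZ hrange
  have hσabs : σ * (adjoint Z * Z) = σ := mul_absZ_eq_self_of_range_le hZ hZZ hσ hrange
  have hZZ0 := Z_mul_Z hZ
  have hZZ0' := adjoint_Z_mul_adjoint_Z hZ
  have hτ : IsSelfAdjoint (Z * σ * adjoint Z) := hσ.conjugate Z
  have hP3τ : P3 N M * (Z * σ * adjoint Z) = Z * σ * adjoint Z := by
    rw [← mul_assoc, ← mul_assoc, P3_mul_Z hZ]
  have hτP3 : Z * σ * adjoint Z * P3 N M = Z * σ * adjoint Z := by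
    rw [mul_assoc, adjoint_Z_mul_P3 hZ]
  have habsτ : adjoint Z * Z * (Z * σ * adjoint Z) = 0 := by
    rw [mul_assoc, ← mul_assoc Z, ← mul_assoc Z, hZZ0]
    simp
  have hτabs : Z * σ * adjoint Z * (adjoint Z * Z) = 0 := by
    rw [← mul_assoc, mul_assoc (Z * σ), hZZ0']
    simp
  have he1 : (Z * σ * adjoint Z) (ket N M 1) = 0 := by
    rw [mul_apply_eq_comp, adjoint_Z_apply_eq_zero hZ (P3_apply_ket_one hN), map_zero]
  have hψ : (Z * σ * adjoint Z) (psi N M) = 0 := by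
    rw [mul_apply_eq_comp, adjoint_Z_apply_eq_zero hZ P3_apply_psi, map_zero]
  have hψ' : (Z * σ * adjoint Z) (psi' N M) = 0 := by
    rw [mul_apply_eq_comp, mul_apply_eq_comp,
      hσ.apply_eq_zero_of_range_le_orthogonal (hrange.trans inf_le_right)
        (Submodule.subset_span (by simp)), map_zero]
  rw [LstarLin_apply_of_commute Γ1m Γ1p Γ2m Γ2p Γ3m γ1m γ1p γ2m γ2p γ3m ha hb hτ he1 hψ hψ'
    (hP3τ.trans hτP3.symm) (habsτ.trans hτabs.symm)]
  have hZτZ : Z * (Z * σ * adjoint Z) * adjoint Z = 0 := by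
    rw [← mul_assoc, ← mul_assoc, hZZ0]
    simp
  have hZτZ' : adjoint Z * (Z * σ * adjoint Z) * Z = σ := by
    rw [← mul_assoc, ← mul_assoc, habsσ, mul_assoc, hσabs]
  simp only [dissipator, adjoint_adjoint, hZZ, hP3τ, hτP3, habsτ, hτabs, hZτZ, hZτZ']
  module

end SupportedState

theorem semigroup_evolution_on_subA_general
    (N M : ℕ) (hN : 3 ≤ N) (hM1 : 1 ≤ M)
    (Γ1m Γ1p Γ2m Γ2p Γ3m γ1m γ1p γ2m γ2p γ3m : ℝ)
    (hΓ : 0 < Γ1m ∧ 0 < Γ1p ∧ 0 < Γ2m ∧ 0 < Γ2p ∧ 0 < Γ3m)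
    (Z : AKVSpace N M →L[ℂ] AKVSpace N M) (hZ : IsAKVZ N M hM1 Z)
    (σ : AKVSpace N M →L[ℂ] AKVSpace N M) (hσ : IsState N M σ)
    (hrange : LinearMap.range (σ : AKVSpace N M →ₗ[ℂ] AKVSpace N M) ≤ subA N M Z) :
    (∀ t : ℝ, 0 ≤ t →
      NormedSpace.exp ((t : ℂ) • LinearMap.toContinuousLinearMap
          (LstarLin N M Γ1m Γ1p Γ2m Γ2p Γ3m γ1m γ1p γ2m γ2p γ3m Z)) σ
        = (((2 * ((N : ℝ) - 1) * Γ2p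
              + 2 * ((N : ℝ) - 1) * Γ2m *
                Real.exp (-(t * (2 * ((N : ℝ) - 1) * Γ2m + 2 * ((N : ℝ) - 1) * Γ2p)))) /
            (2 * ((N : ℝ) - 1) * Γ2m + 2 * ((N : ℝ) - 1) * Γ2p) : ℝ) : ℂ) • σ
          + (((2 * ((N : ℝ) - 1) * Γ2m *
                (1 - Real.exp (-(t * (2 * ((N : ℝ) - 1) * Γ2m + 2 * ((N : ℝ) - 1) * Γ2p))))) /
              (2 * ((N : ℝ) - 1) * Γ2m + 2 * ((N : ℝ) - 1) * Γ2p) : ℝ) : ℂ) •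
            (Z * σ * ContinuousLinearMap.adjoint Z)) ∧
    Filter.Tendsto
      (fun t : ℝ =>
        NormedSpace.exp ((t : ℂ) • LinearMap.toContinuousLinearMap
          (LstarLin N M Γ1m Γ1p Γ2m Γ2p Γ3m γ1m γ1p γ2m γ2p γ3m Z)) σ)
      Filter.atTop
      (nhds ((((2 * ((N : ℝ) - 1) * Γ2p) /
            (2 * ((N : ℝ) - 1) * Γ2m + 2 * ((N : ℝ) - 1) * Γ2p) : ℝ) : ℂ) • σ
          + (((2 * ((N : ℝ) - 1) * Γ2m) /
              (2 * ((N : ℝ) - 1) * Γ2m + 2 * ((N : ℝ) - 1) * Γ2p) : ℝ) : ℂ) •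
            (Z * σ * ContinuousLinearMap.adjoint Z))) := by
  obtain ⟨hZP, hZZ, -, -⟩ := hZ
  have hσsa : IsSelfAdjoint σ := hσ.1.isSelfAdjoint
  have hN1 : (0 : ℝ) < (N : ℝ) - 1 := by
    have : (3 : ℝ) ≤ N := by exact_mod_cast hN
    linarith
  have ha : 0 < 2 * ((N : ℝ) - 1) * Γ2m := by have := hΓ.2.2.1; positivity
  have hb : 0 < 2 * ((N : ℝ) - 1) * Γ2p := by have := hΓ.2.2.2.1; positivity
  have hLσ := LstarLin_apply_of_range_le hZP hZZ hσsa hrange Γ1m Γ1p Γ2m Γ2p Γ3m γ1m γ1p γ2m γ2p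
    γ3m ha.le hb.le
  have hLτ := LstarLin_apply_conj_of_range_le hZP hZZ hσsa hrange Γ1m Γ1p Γ2m Γ2p Γ3m γ1m γ1p γ2m
    γ2p γ3m ha.le hb.le (by omega)
  have hexp := exp_smul_apply_eq_of_two_state (L := LinearMap.toContinuousLinearMap
    (LstarLin N M Γ1m Γ1p Γ2m Γ2p Γ3m γ1m γ1p γ2m γ2p γ3m Z)) (add_pos ha hb).ne' hLσ hLτ
  exact ⟨fun t _ => hexp t,
    (tendsto_two_state_relaxation (add_pos ha hb)).congr fun t => (hexp t).symm⟩

/-- In the modified AKV model, with `a = 2(N−1)Γ₂₋` and `b = 2(N−1)Γ₂₊`, for every state `σ`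
supported in `Im|Z| ∩ {ψ, Z⋆ψ'}^⊥` and every `t ≥ 0` one has
`exp(tℒ_*)(σ) = ((b + a e^{−t(a+b)})/(a+b)) σ + ((a(1 − e^{−t(a+b)}))/(a+b)) ZσZ⋆`, and hence
`exp(tℒ_*)(σ) → (b/(a+b)) σ + (a/(a+b)) ZσZ⋆` as `t → ∞`. -/
theorem semigroup_evolution_on_subA
    (N M : ℕ) (hN : 3 ≤ N) (hM1 : 1 ≤ M) (hM2 : M ≤ N - 1)
    (Γ1m Γ1p Γ2m Γ2p Γ3m γ1m γ1p γ2m γ2p γ3m : ℝ)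
    (hΓ : 0 < Γ1m ∧ 0 < Γ1p ∧ 0 < Γ2m ∧ 0 < Γ2p ∧ 0 < Γ3m)
    (hγ : 0 < γ1m ∧ 0 < γ1p ∧ 0 < γ2m ∧ 0 < γ2p ∧ 0 < γ3m)
    (Z : AKVSpace N M →L[ℂ] AKVSpace N M) (hZ : IsAKVZ N M hM1 Z)
    (σ : AKVSpace N M →L[ℂ] AKVSpace N M) (hσ : IsState N M σ)
    (hrange : LinearMap.range (σ : AKVSpace N M →ₗ[ℂ] AKVSpace N M) ≤ subA N M Z) :
    (∀ t : ℝ, 0 ≤ t →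
      NormedSpace.exp ((t : ℂ) • LinearMap.toContinuousLinearMap
          (LstarLin N M Γ1m Γ1p Γ2m Γ2p Γ3m γ1m γ1p γ2m γ2p γ3m Z)) σ
        = (((2 * ((N : ℝ) - 1) * Γ2p
              + 2 * ((N : ℝ) - 1) * Γ2m *
                Real.exp (-(t * (2 * ((N : ℝ) - 1) * Γ2m + 2 * ((N : ℝ) - 1) * Γ2p)))) /
            (2 * ((N : ℝ) - 1) * Γ2m + 2 * ((N : ℝ) - 1) * Γ2p) : ℝ) : ℂ) • σ
          + (((2 * ((N : ℝ) - 1) * Γ2m *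
                (1 - Real.exp (-(t * (2 * ((N : ℝ) - 1) * Γ2m + 2 * ((N : ℝ) - 1) * Γ2p))))) /
              (2 * ((N : ℝ) - 1) * Γ2m + 2 * ((N : ℝ) - 1) * Γ2p) : ℝ) : ℂ) •
            (Z * σ * ContinuousLinearMap.adjoint Z)) ∧
    Filter.Tendsto
      (fun t : ℝ =>
        NormedSpace.exp ((t : ℂ) • LinearMap.toContinuousLinearMap
          (LstarLin N M Γ1m Γ1p Γ2m Γ2p Γ3m γ1m γ1p γ2m γ2p γ3m Z)) σ)
      Filter.atTop
      (nhds ((((2 * ((N : ℝ) - 1) * Γ2p) /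
            (2 * ((N : ℝ) - 1) * Γ2m + 2 * ((N : ℝ) - 1) * Γ2p) : ℝ) : ℂ) • σ
          + (((2 * ((N : ℝ) - 1) * Γ2m) /
              (2 * ((N : ℝ) - 1) * Γ2m + 2 * ((N : ℝ) - 1) * Γ2p) : ℝ) : ℂ) •
            (Z * σ * ContinuousLinearMap.adjoint Z))) :=
  semigroup_evolution_on_subA_general N M hN hM1 Γ1m Γ1p Γ2m Γ2p Γ3m γ1m γ1p γ2m γ2p γ3m hΓ Z hZ σ
    hσ hrange

end AKV
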